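/- Let n ≥ 1, N = 2^n, let Φ be any real n×n matrix, and let T be the N×N matrix with (y,x) entry (1/√N) exp(2πi (yΦxᵀ)/N), where x, y range over {0,1}^n. Then T is unitary if and only if for every pair of distinct bit vectors y, u ∈ {0,1}^n there exists a column index 0 ≤ j ≤ n-1 such that Σ_{i=0}^{n-1}(y_i - u_i)·φ_{ij} ≡ 2^{n-1} (mod 2^n), i.e., that signed sum equals 2^{n-1} + k·2^n for some integer k. -/

import Mathlib

/-!
The `(y, u)` entry of `T Tᴴ` is the character sum
`2⁻ⁿ Σₓ exp(2πi Σⱼ cⱼ xⱼ / 2ⁿ)` with `cⱼ = Σᵢ (yᵢ - uᵢ) φᵢⱼ`. Since `x` ranges over all bit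
vectors, the sum factors as `2⁻ⁿ ∏ⱼ (1 + exp(2πi cⱼ / 2ⁿ))`. On the diagonal every `cⱼ` vanishes
and the entry is `1`; off the diagonal the entry vanishes iff some factor does, i.e. iff some
`exp(2πi cⱼ / 2ⁿ) = -1`, which is the congruence `cⱼ ≡ 2ⁿ⁻¹ (mod 2ⁿ)`.
-/

open Complex Finset Matrix
open scoped Real

theorem Fintype.sum_bitVec_exp_sum_mul {ι : Type*} [Fintype ι] [DecidableEq ι] (c : ι → ℂ) :
    ∑ x : ι → Fin 2, exp (∑ j, c j * ((x j : ℕ) : ℂ)) = ∏ j, (1 + exp (c j)) := by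
  simp only [exp_sum]
  rw [← Fintype.prod_sum (fun j (b : Fin 2) => exp (c j * (b : ℕ)))]
  simp [Fin.sum_univ_two]

theorem sum_sum_mul_sub_sum_sum_mul {ι κ R : Type*} [Fintype ι] [Fintype κ] [CommRing R]
    (a b : ι → R) (Φ : Matrix ι κ R) (x : κ → R) :
    ∑ i, ∑ j, a i * Φ i j * x j - ∑ i, ∑ j, b i * Φ i j * x j
      = ∑ j, (∑ i, (a i - b i) * Φ i j) * x j := by
  simp only [← sum_sub_distrib, sum_mul]
  rw [sum_comm]
  exact sum_congr rfl fun _ _ => sum_congr rfl fun _ _ => by ring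

theorem ofReal_mul_exp_mul_star_ofReal_mul_exp (s a b M : ℝ) :
    (s : ℂ) * exp (2 * π * I * a / M) * star ((s : ℂ) * exp (2 * π * I * b / M))
      = ((s ^ 2 : ℝ) : ℂ) * exp (2 * π * I * ((a - b : ℝ) : ℂ) / M) := by
  simp only [star_mul', RCLike.star_def, ← exp_conj, conj_ofReal, map_div₀, map_mul, conj_I,
    map_ofNat]
  rw [mul_mul_mul_comm, ← exp_add]
  push_cast
  ring_nf

theorem Complex.exp_two_pi_mul_I_mul_div_eq_neg_one_iff {M : ℝ} (hM : M ≠ 0) (c : ℝ) :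
    exp (2 * π * I * c / M) = -1 ↔ ∃ k : ℤ, c = M / 2 + k * M := by
  rw [← exp_pi_mul_I, exp_eq_exp_iff_exists_int]
  refine exists_congr fun k => ?_
  have hM' : (M : ℂ) ≠ 0 := ofReal_ne_zero.mpr hM
  have hfactor : 2 * π * I * c / M - (π * I + k * (2 * π * I))
      = 2 * π * I / M * ((c : ℂ) - (M / 2 + k * M)) := by
    field_simp
  rw [← sub_eq_zero, hfactor, mul_eq_zero, or_iff_right (by simp [hM', Real.pi_ne_zero]),
    sub_eq_zero]
  norm_cast

theorem Matrix.eq_one_iff_of_diag {ι R : Type*} [DecidableEq ι] [Zero R] [One R]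
    {A : Matrix ι ι R} (hA : ∀ i, A i i = 1) : A = 1 ↔ ∀ i j, i ≠ j → A i j = 0 := by
  refine ⟨fun h i j hij => by simp [h, one_apply_ne hij], fun h => ?_⟩
  ext i j
  by_cases hij : i = j
  · subst hij; simp [hA]
  · simp [h i j hij, one_apply_ne hij]

theorem one_add_exp_two_pi_mul_I_mul_div_two_pow_eq_zero_iff {n : ℕ} (hn : 1 ≤ n) (c : ℝ) :
    1 + exp (2 * π * I * c / (2 : ℂ) ^ n) = 0 ↔ ∃ k : ℤ, c = 2 ^ (n - 1) + k * 2 ^ n := by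
  have hhalf : (2 : ℝ) ^ n / 2 = 2 ^ (n - 1) := by
    rw [div_eq_iff two_ne_zero, ← pow_succ, Nat.sub_add_cancel hn]
  rw [add_eq_zero_iff_eq_neg', ← hhalf, ← Complex.exp_two_pi_mul_I_mul_div_eq_neg_one_iff
    (by positivity : (2 : ℝ) ^ n ≠ 0)]
  norm_cast

theorem mul_star_apply_eq_prod_of_phase {n : ℕ} {Φ : Matrix (Fin n) (Fin n) ℝ}
    {T : Matrix (Fin n → Fin 2) (Fin n → Fin 2) ℂ}
    (hT : ∀ y x : Fin n → Fin 2,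
      T y x = ((1 / Real.sqrt (2 ^ n) : ℝ) : ℂ) *
        exp (2 * π * I * ((∑ i, ∑ j, ((y i : ℕ) : ℝ) * Φ i j * ((x j : ℕ) : ℝ) : ℝ) : ℂ) / 2 ^ n))
    (y u : Fin n → Fin 2) :
    (T * star T) y u = ((2 : ℂ) ^ n)⁻¹ * ∏ j, (1 + exp (2 * π * I *
      ((∑ i, (((y i : ℕ) : ℝ) - ((u i : ℕ) : ℝ)) * Φ i j : ℝ) : ℂ) / (2 : ℂ) ^ n)) := by
  -- a visibly real denominator lets conjugation pass through the phase
  have hM : ((2 : ℂ) ^ n) = ((2 ^ n : ℝ) : ℂ) := by norm_cast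
  have hs : (1 / Real.sqrt (2 ^ n)) ^ 2 = ((2 : ℝ) ^ n)⁻¹ := by
    rw [div_pow, Real.sq_sqrt (by positivity), one_pow, one_div]
  simp only [mul_apply, star_apply, hT, hM, ofReal_mul_exp_mul_star_ofReal_mul_exp, hs,
    sum_sum_mul_sub_sum_sum_mul]
  rw [← mul_sum, ← Fintype.sum_bitVec_exp_sum_mul]
  push_cast
  congr! 3 with x
  rw [mul_sum, sum_div]
  congr! 1 with j
  ring

/-- Let `Φ` be any real `n×n` matrix and `T` the `2^n × 2^n` matrix with
`(y,x)` entry `(1/√N) exp(2πi (yΦxᵀ)/N)`. Then `T` is unitary iff for every pair of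
distinct bit vectors `y, u` there is a column `j` with
`Σ_i (y_i - u_i) φ_{ij} ≡ 2^{n-1} (mod 2^n)`. -/
theorem generalized_qft_stmt_8 (n : ℕ) (hn : 1 ≤ n)
    (Φ : Matrix (Fin n) (Fin n) ℝ)
    (T : Matrix (Fin n → Fin 2) (Fin n → Fin 2) ℂ)
    (hT : ∀ y x : Fin n → Fin 2,
      T y x = ((1 / Real.sqrt (2 ^ n) : ℝ) : ℂ) *
        Complex.exp (2 * (Real.pi : ℂ) * Complex.I *
          ((∑ i, ∑ j, ((y i : ℕ) : ℝ) * Φ i j * ((x j : ℕ) : ℝ) : ℝ) : ℂ) / (2 : ℂ) ^ n)) :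
    T ∈ Matrix.unitaryGroup (Fin n → Fin 2) ℂ
      ↔ ∀ y u : Fin n → Fin 2, y ≠ u → ∃ j : Fin n, ∃ k : ℤ,
          (∑ i, (((y i : ℕ) : ℝ) - ((u i : ℕ) : ℝ)) * Φ i j)
            = 2 ^ (n - 1) + (k : ℝ) * 2 ^ n := by
  have hdiag : ∀ y, (T * star T) y y = 1 := fun y => by
    simp [mul_star_apply_eq_prod_of_phase hT, one_add_one_eq_two]
  rw [mem_unitaryGroup_iff, Matrix.eq_one_iff_of_diag hdiag]
  refine forall₂_congr fun y u => imp_congr_right fun _ => ?_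
  simp only [mul_star_apply_eq_prod_of_phase hT, mul_eq_zero, inv_eq_zero, pow_eq_zero_iff',
    two_ne_zero, false_and, false_or, prod_eq_zero_iff, mem_univ, true_and,
    one_add_exp_two_pi_mul_I_mul_div_two_pow_eq_zero_iff hn]
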